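/- Let A be a matrix over Z_m. Then the subgroup of Z_m^{(rows)} generated by the rows of A is isomorphic to the subgroup generated by the columns of A; in particular the row rank and column rank of A coincide. -/

import Mathlib

open Finset

/-- The rank of an additive abelian group: the minimal `r` such that it is isomorphic
to a product of `r` cyclic groups. -/
noncomputable def groupRank (G : Type*) [AddCommGroup G] : ℕ :=
  sInf {r : ℕ | ∃ c : Fin r → ℕ, Nonempty (G ≃+ ((i : Fin r) → ZMod (c i)))}

/-- The subgroup of `ZMod m ^ k` generated by the columns of a matrix. -/
def colSpan {m k l : ℕ} (A : Matrix (Fin k) (Fin l) (ZMod m)) :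
    AddSubgroup (Fin k → ZMod m) :=
  AddSubgroup.closure (Set.range fun j i => A i j)

/-- The rank of a matrix over `ZMod m`: the rank of its column space. -/
noncomputable def matrixRank {m k l : ℕ} (A : Matrix (Fin k) (Fin l) (ZMod m)) : ℕ :=
  groupRank (colSpan A)

/-!
Lift `A` to an integer matrix. The Smith normal form of its column space gives a factorization
`L * diagonal d * P` with `L` left-invertible and `P` right-invertible. Such a factorization
survives reduction mod `m` and transposition (`(diagonal d)ᵀ = diagonal d`), and the column
space of `L * diagonal d * P` is isomorphic to that of `diagonal d`, since `L` is injective and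
`P` surjective. So the column spaces of `A` and `Aᵀ` are both isomorphic to that of
`diagonal (d mod m)`.
-/

namespace Matrix

variable {R S ι κ ν : Type*} [Fintype ι] [Fintype κ] [Fintype ν] [DecidableEq ν]

def FactorsThroughDiagonal [CommSemiring R] (A : Matrix ι κ R) (d : ν → R) : Prop :=
  ∃ (L : Matrix ι ν R) (L' : Matrix ν ι R) (P : Matrix ν κ R) (P' : Matrix κ ν R),
    L' * L = 1 ∧ P * P' = 1 ∧ A = L * diagonal d * P

namespace FactorsThroughDiagonal

variable [CommSemiring R] {A : Matrix ι κ R} {d : ν → R}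

theorem transpose (h : A.FactorsThroughDiagonal d) : Aᵀ.FactorsThroughDiagonal d := by
  obtain ⟨L, L', P, P', hL, hP, rfl⟩ := h
  refine ⟨Pᵀ, P'ᵀ, Lᵀ, L'ᵀ, ?_, ?_, ?_⟩
  · rw [← transpose_mul, hP, transpose_one]
  · rw [← transpose_mul, hL, transpose_one]
  · rw [transpose_mul, transpose_mul, diagonal_transpose, Matrix.mul_assoc]

theorem map [CommSemiring S] (h : A.FactorsThroughDiagonal d) (f : R →+* S) :
    (A.map f).FactorsThroughDiagonal (f ∘ d) := by
  obtain ⟨L, L', P, P', hL, hP, rfl⟩ := h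
  refine ⟨L.map f, L'.map f, P.map f, P'.map f, ?_, ?_, ?_⟩
  · rw [← Matrix.map_mul, hL, Matrix.map_one _ f.map_zero f.map_one]
  · rw [← Matrix.map_mul, hP, Matrix.map_one _ f.map_zero f.map_one]
  · rw [Matrix.map_mul, Matrix.map_mul, diagonal_map f.map_zero]
    rfl

theorem nonempty_range_mulVecLin_equiv (h : A.FactorsThroughDiagonal d) :
    Nonempty (LinearMap.range A.mulVecLin ≃ₗ[R] LinearMap.range (diagonal d).mulVecLin) := by
  obtain ⟨L, L', P, P', hL, hP, rfl⟩ := h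
  have hL_inj : Function.Injective L.mulVecLin := fun v w hvw => by
    simpa [mulVec_mulVec, hL] using congrArg (L' *ᵥ ·) hvw
  have hP_surj : LinearMap.range P.mulVecLin = ⊤ :=
    LinearMap.range_eq_top.mpr fun v => ⟨P' *ᵥ v, by simp [mulVec_mulVec, hP]⟩
  rw [mulVecLin_mul, mulVecLin_mul, LinearMap.range_comp_of_range_eq_top _ hP_surj,
    LinearMap.range_comp]
  exact ⟨(Submodule.equivMapOfInjective _ hL_inj _).symm⟩

end FactorsThroughDiagonal

theorem exists_factorsThroughDiagonal [CommRing R] [IsDomain R] [IsPrincipalIdealRing R]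
    [DecidableEq ι] [DecidableEq κ] (A : Matrix ι κ R) :
    ∃ (n : ℕ) (d : Fin n → R), A.FactorsThroughDiagonal d := by
  obtain ⟨n, snf⟩ := (LinearMap.range A.mulVecLin).smithNormalForm (Pi.basisFun R ι)
  let emb : (Fin n → R) →ₗ[R] ι → R := Fintype.linearCombination R (snf.bM ∘ snf.f)
  let proj : (ι → R) →ₗ[R] Fin n → R :=
    LinearMap.funLeft R R snf.f ∘ₗ snf.bM.equivFun.toLinearMap
  let coord : (κ → R) →ₗ[R] Fin n → R :=
    snf.bN.equivFun.toLinearMap ∘ₗ A.mulVecLin.rangeRestrict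
  have proj_emb : proj ∘ₗ emb = LinearMap.id := by
    ext c t
    simp [emb, proj, LinearMap.funLeft, Finsupp.single_apply, Pi.single_apply,
      snf.f.injective.eq_iff, eq_comm]
  obtain ⟨sec, coord_sec⟩ := Module.projective_lifting_property coord LinearMap.id
    (snf.bN.equivFun.surjective.comp A.mulVecLin.surjective_rangeRestrict)
  have hA : A.mulVecLin = emb ∘ₗ (diagonal snf.a).mulVecLin ∘ₗ coord := by
    refine LinearMap.ext fun y => ?_
    have hy := congrArg Subtype.val (snf.bN.sum_equivFun (A.mulVecLin.rangeRestrict y))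
    simp only [Submodule.coe_sum, Submodule.coe_smul, snf.snf, ← mul_smul] at hy
    refine hy.symm.trans ?_
    simp [emb, coord, Fintype.linearCombination_apply, mulVec_diagonal, mul_comm]
  refine ⟨n, snf.a, LinearMap.toMatrix' emb, LinearMap.toMatrix' proj,
    LinearMap.toMatrix' coord, LinearMap.toMatrix' sec, ?_, ?_, ?_⟩
  · rw [← LinearMap.toMatrix'_comp, proj_emb, LinearMap.toMatrix'_id]
  · rw [← LinearMap.toMatrix'_comp, coord_sec, LinearMap.toMatrix'_id]
  · apply Matrix.toLin'.injective
    rw [Matrix.toLin'_mul, Matrix.toLin'_mul, Matrix.toLin'_toMatrix', Matrix.toLin'_toMatrix']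
    exact hA

end Matrix

theorem colSpan_eq_toAddSubgroup_range {m k l : ℕ} (A : Matrix (Fin k) (Fin l) (ZMod m)) :
    colSpan A = (LinearMap.range A.mulVecLin).toAddSubgroup := by
  have h := congrArg Submodule.toAddSubgroup
    (Submodule.restrictScalars_span ℤ (ZMod m) ZMod.intCast_surjective (Set.range A.col))
  rw [Submodule.span_int_eq_addSubgroupClosure] at h
  rw [Matrix.range_mulVecLin]
  exact h.symm

noncomputable def colSpanEquivRange {m k l : ℕ} (A : Matrix (Fin k) (Fin l) (ZMod m)) :
    colSpan A ≃+ LinearMap.range A.mulVecLin :=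
  AddEquiv.addSubgroupCongr (colSpan_eq_toAddSubgroup_range A)

theorem groupRank_congr {G H : Type*} [AddCommGroup G] [AddCommGroup H] (e : G ≃+ H) :
    groupRank G = groupRank H := by
  unfold groupRank
  congr 1
  ext r
  exact exists_congr fun c => ⟨fun ⟨f⟩ => ⟨e.symm.trans f⟩, fun ⟨f⟩ => ⟨e.trans f⟩⟩

theorem rowSpan_iso_colSpan (m k l : ℕ) (A : Matrix (Fin k) (Fin l) (ZMod m)) :
    Nonempty ((colSpan A.transpose) ≃+ (colSpan A)) ∧
      matrixRank A.transpose = matrixRank A := by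
  obtain ⟨B, rfl⟩ :
      ∃ B : Matrix (Fin k) (Fin l) ℤ, B.map (Int.castRingHom (ZMod m)) = A :=
    ⟨A.map fun x => (x.cast : ℤ), by ext; simp⟩
  obtain ⟨n, d, hB⟩ := B.exists_factorsThroughDiagonal
  have hA := hB.map (Int.castRingHom (ZMod m))
  obtain ⟨e⟩ := hA.nonempty_range_mulVecLin_equiv
  obtain ⟨eT⟩ := hA.transpose.nonempty_range_mulVecLin_equiv
  let iso :=
    (colSpanEquivRange _).trans ((eT.trans e.symm).toAddEquiv.trans (colSpanEquivRange _).symm)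
  exact ⟨⟨iso⟩, groupRank_congr iso⟩
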